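/- arXiv:2202.00954 — 2 statements merged into one kernel-verified Lean document; each statement's English description precedes it below -/
import Mathlib

section
/- Let π̃ ∈ Π(μ¹,…,μ^N) be a multi-marginal plan satisfying ∫ ‖x₁ − x_i‖² dπ̃ = W₂²(μ¹, μ^i) for all i = 2,…,N (as is the case for any plan produced by the reference iteration). Then Φ(π̃) ≤ Σ_{i=2}^N λ_i W₂²(μ¹, μ^i), and consequently Φ(π̃) ≤ (1/λ₁) · Φ(π̂) for every optimal plan π̂ minimizing Φ over Π(μ¹,…,μ^N). -/
open MeasureTheory
open scoped ENNReal

noncomputable section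

/-- Points of the `d`-dimensional Euclidean space. -/
abbrev Pt (d : ℕ) := EuclideanSpace ℝ (Fin d)

/-- A measure is finitely supported if it vanishes outside a finite set. -/
def FinitelySupported {α : Type*} [MeasurableSpace α] (μ : Measure α) : Prop :=
  ∃ s : Finset α, μ ((s : Set α)ᶜ) = 0

/-- `λ` lies in the open probability simplex. -/
def InSimplex {N : ℕ} (l : Fin N → ℝ) : Prop :=
  (∀ i, 0 < l i) ∧ ∑ i, l i = 1

/-- `π` is a multi-marginal transport plan with marginals `μ i`. -/
def IsPlan {d N : ℕ} (μ : Fin N → Measure (Pt d)) (π : Measure (Fin N → Pt d)) : Prop :=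
  IsProbabilityMeasure π ∧ ∀ i, π.map (fun x => x i) = μ i

/-- The multi-marginal optimal transport cost `Φ(π)`. -/
def MOT {d N : ℕ} (l : Fin N → ℝ) (π : Measure (Fin N → Pt d)) : ℝ≥0∞ :=
  ∫⁻ x, ∑ s : Fin N, ∑ t : Fin N,
    (if s < t then ENNReal.ofReal (l s * l t * ‖x s - x t‖ ^ 2) else 0) ∂π

/-- `π` is a coupling of `μ` and `ν`. -/
def IsCoupling {α : Type*} [MeasurableSpace α] (μ ν : Measure α) (π : Measure (α × α)) : Prop :=
  IsProbabilityMeasure π ∧ π.map Prod.fst = μ ∧ π.map Prod.snd = ν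

/-- The squared Wasserstein-2 distance: the optimal squared-Euclidean transport cost
over all couplings. -/
def W2sq {d : ℕ} (μ ν : Measure (Pt d)) : ℝ≥0∞ :=
  sInf { c : ℝ≥0∞ | ∃ π : Measure (Pt d × Pt d), IsCoupling μ ν π ∧
    c = ∫⁻ p, ENNReal.ofReal (‖p.1 - p.2‖ ^ 2) ∂π }

/-- The barycenter objective `Ψ(ν) = ∑ i λ i * W₂²(μ i, ν)`. -/
def Psi {d N : ℕ} (l : Fin N → ℝ) (μ : Fin N → Measure (Pt d)) (ν : Measure (Pt d)) : ℝ≥0∞ :=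
  ∑ i, ENNReal.ofReal (l i) * W2sq (μ i) ν

/-- The `λ`-weighted mean map `M_λ`. -/
def wmean {d N : ℕ} (l : Fin N → ℝ) (x : Fin N → Pt d) : Pt d :=
  ∑ i, l i • x i

/-- The support-as-atoms of a measure. -/
def msupport {α : Type*} [MeasurableSpace α] (μ : Measure α) : Set α :=
  {x | μ {x} ≠ 0}

/-!
For weights `w` with `∑ w = 1` and any point `y`,
`∑_{s<t} w_s w_t ‖x_s - x_t‖² = ∑_t w_t ‖x_t - y‖² - ‖∑_t w_t x_t - y‖²`.
Taking `y = x₁` and integrating against `π̃` bounds `Φ(π̃)` by `∑_t λ_t ∫ ‖x₁ - x_t‖² dπ̃`,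
which is `∑_{t ≥ 2} λ_t W₂²(μ¹, μ^t)` by hypothesis. Conversely, in any plan `π̂` the terms
`s = 1` of `Φ` alone contribute at least `λ₁ ∑_{t ≥ 2} λ_t W₂²(μ¹, μ^t)`, because the
`(x₁, x_t)`-marginal of `π̂` is a coupling of `μ¹` and `μ^t`; hence `λ₁ Φ(π̃) ≤ Φ(π̂)`.
-/

open Finset

theorem two_mul_sum_sum_ite_lt {ι : Type*} [Fintype ι] [LinearOrder ι] (f : ι → ι → ℝ)
    (hsymm : ∀ s t, f s t = f t s) (hdiag : ∀ s, f s s = 0) :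
    2 * ∑ s, ∑ t, (if s < t then f s t else 0) = ∑ s, ∑ t, f s t := by
  have hsplit : ∀ s t, f s t = (if s < t then f s t else 0) + (if t < s then f t s else 0) := by
    intro s t
    rcases lt_trichotomy s t with h | rfl | h
    · simp [h, h.not_gt]
    · simp [hdiag]
    · simp [h, h.not_gt, hsymm s t]
  calc 2 * ∑ s, ∑ t, (if s < t then f s t else 0)
      = ∑ s, ∑ t, (if s < t then f s t else 0) + ∑ s, ∑ t, (if t < s then f t s else 0) := by
        rw [two_mul, sum_comm (f := fun s t => if t < s then f t s else 0)]
    _ = ∑ s, ∑ t, f s t := by simp only [← sum_add_distrib, ← hsplit]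

section Variance

variable {ι E : Type*} [Fintype ι] [NormedAddCommGroup E] [InnerProductSpace ℝ E]

theorem sum_sum_mul_mul_norm_sub_sq (w : ι → ℝ) (hw : ∑ i, w i = 1) (x : ι → E) (y : E) :
    ∑ s, ∑ t, w s * w t * ‖x s - x t‖ ^ 2
      = 2 * (∑ t, w t * ‖x t - y‖ ^ 2 - ‖∑ t, w t • x t - y‖ ^ 2) := by
  set u : ι → E := fun t => x t - y
  have hxu : ∀ s t, x s - x t = u s - u t := fun s t => (sub_sub_sub_cancel_right _ _ y).symm
  have hmean : ∑ t, w t • x t - y = ∑ t, w t • u t := by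
    simp only [u, smul_sub, sum_sub_distrib, ← sum_smul, hw, one_smul]
  have hsq : ‖∑ t, w t • u t‖ ^ 2 = ∑ s, ∑ t, w s * w t * inner ℝ (u s) (u t) := by
    simp only [← real_inner_self_eq_norm_sq, sum_inner, inner_sum, real_inner_smul_left,
      real_inner_smul_right, mul_assoc]
    exact sum_congr rfl fun s _ => sum_congr rfl fun t _ => by rw [real_inner_comm]
  calc ∑ s, ∑ t, w s * w t * ‖x s - x t‖ ^ 2
      = ∑ s, ∑ t, w s * w t * (‖u s‖ ^ 2 - 2 * inner ℝ (u s) (u t) + ‖u t‖ ^ 2) := by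
        simp only [hxu, norm_sub_sq_real]
    _ = 2 * (∑ t, w t * ‖u t‖ ^ 2 - ‖∑ t, w t • u t‖ ^ 2) := by
        rw [hsq]
        simp only [mul_add, mul_sub, sum_add_distrib, sum_sub_distrib]
        rw [sum_comm (f := fun s t => w s * w t * ‖u t‖ ^ 2)]
        simp only [← sum_mul, ← mul_sum, hw, mul_one, one_mul, mul_left_comm _ (2 : ℝ)]
        ring
    _ = 2 * (∑ t, w t * ‖x t - y‖ ^ 2 - ‖∑ t, w t • x t - y‖ ^ 2) := by rw [hmean]

theorem sum_sum_ite_lt_mul_mul_norm_sub_sq_le [LinearOrder ι] (w : ι → ℝ)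
    (hw : ∑ i, w i = 1) (x : ι → E) (y : E) :
    ∑ s, ∑ t, (if s < t then w s * w t * ‖x s - x t‖ ^ 2 else 0)
      ≤ ∑ t, w t * ‖x t - y‖ ^ 2 := by
  have hhalf := two_mul_sum_sum_ite_lt (fun s t => w s * w t * ‖x s - x t‖ ^ 2)
    (fun s t => by rw [norm_sub_rev]; ring) (fun s => by simp)
  rw [sum_sum_mul_mul_norm_sub_sq w hw x y] at hhalf
  nlinarith [sq_nonneg ‖∑ t, w t • x t - y‖]

end Variance

section Transport

variable {d N : ℕ}

theorem W2sq_le_lintegral_of_isPlan {μ : Fin N → Measure (Pt d)} {π : Measure (Fin N → Pt d)}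
    (hπ : IsPlan μ π) (i j : Fin N) :
    W2sq (μ i) (μ j) ≤ ∫⁻ x, ENNReal.ofReal (‖x i - x j‖ ^ 2) ∂π := by
  have := hπ.1
  have hij : Measurable fun x : Fin N → Pt d => (x i, x j) := by fun_prop
  refine sInf_le ⟨π.map fun x => (x i, x j), ⟨?_, ?_, ?_⟩, ?_⟩
  · exact Measure.isProbabilityMeasure_map hij.aemeasurable
  · rw [Measure.map_map measurable_fst hij]; exact hπ.2 i
  · rw [Measure.map_map measurable_snd hij]; exact hπ.2 j
  · rw [lintegral_map (by fun_prop) hij]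

theorem MOT_eq_lintegral_ofReal {l : Fin N → ℝ} (hl : ∀ i, 0 ≤ l i)
    (π : Measure (Fin N → Pt d)) :
    MOT l π = ∫⁻ x, ENNReal.ofReal
      (∑ s, ∑ t, if s < t then l s * l t * ‖x s - x t‖ ^ 2 else 0) ∂π := by
  have hterm : ∀ (x : Fin N → Pt d) s t,
      0 ≤ (if s < t then l s * l t * ‖x s - x t‖ ^ 2 else 0) := fun x s t => by
    split_ifs
    exacts [mul_nonneg (mul_nonneg (hl s) (hl t)) (sq_nonneg _), le_rfl]
  refine lintegral_congr fun x => ?_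
  rw [ENNReal.ofReal_sum_of_nonneg fun s _ => sum_nonneg fun t _ => hterm x s t]
  refine sum_congr rfl fun s _ => ?_
  rw [ENNReal.ofReal_sum_of_nonneg fun t _ => hterm x s t]
  refine sum_congr rfl fun t _ => ?_
  split_ifs <;> simp

theorem MOT_le_sum_erase_mul_lintegral {l : Fin N → ℝ} (hl₀ : ∀ i, 0 ≤ l i)
    (hl₁ : ∑ i, l i = 1) (π : Measure (Fin N → Pt d)) (i : Fin N) :
    MOT l π ≤ ∑ t ∈ univ.erase i,
      ENNReal.ofReal (l t) * ∫⁻ x, ENNReal.ofReal (‖x i - x t‖ ^ 2) ∂π := by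
  calc MOT l π
      ≤ ∫⁻ x, ∑ t, ENNReal.ofReal (l t) * ENNReal.ofReal (‖x i - x t‖ ^ 2) ∂π := by
        rw [MOT_eq_lintegral_ofReal hl₀]
        refine lintegral_mono fun x => ?_
        refine (ENNReal.ofReal_le_ofReal
          (sum_sum_ite_lt_mul_mul_norm_sub_sq_le l hl₁ x (x i))).trans_eq ?_
        rw [ENNReal.ofReal_sum_of_nonneg fun t _ => mul_nonneg (hl₀ t) (sq_nonneg _)]
        simp only [ENNReal.ofReal_mul (hl₀ _), norm_sub_rev]
    _ = ∑ t, ENNReal.ofReal (l t) * ∫⁻ x, ENNReal.ofReal (‖x i - x t‖ ^ 2) ∂π := by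
        rw [lintegral_finsetSum _ fun t _ => by fun_prop]
        exact sum_congr rfl fun t _ => lintegral_const_mul _ (by fun_prop)
    _ = _ := by simp [← sum_erase_add _ _ (mem_univ i)]

theorem sum_Ioi_mul_lintegral_le_MOT (l : Fin N → ℝ) (π : Measure (Fin N → Pt d)) (i : Fin N) :
    ∑ t ∈ Ioi i, ENNReal.ofReal (l i * l t) * ∫⁻ x, ENNReal.ofReal (‖x i - x t‖ ^ 2) ∂π
      ≤ MOT l π := by
  calc ∑ t ∈ Ioi i, ENNReal.ofReal (l i * l t) * ∫⁻ x, ENNReal.ofReal (‖x i - x t‖ ^ 2) ∂π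
      = ∫⁻ x, ∑ t, (if i < t then ENNReal.ofReal (l i * l t * ‖x i - x t‖ ^ 2) else 0) ∂π := by
        simp only [← sum_filter, filter_lt_eq_Ioi]
        rw [lintegral_finsetSum _ fun t _ => by fun_prop]
        refine sum_congr rfl fun t _ => ?_
        rw [← lintegral_const_mul _ (by fun_prop)]
        simp only [ENNReal.ofReal_mul' (sq_nonneg _)]
    _ ≤ MOT l π := lintegral_mono fun x =>
        single_le_sum (f := fun s => ∑ t,
          (if s < t then ENNReal.ofReal (l s * l t * ‖x s - x t‖ ^ 2) else 0))
          (fun s _ => zero_le) (mem_univ i)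

end Transport

theorem stmt11_general {d N : ℕ} (hN : 0 < N) (μ : Fin N → Measure (Pt d))
    (l : Fin N → ℝ) (hl : InSimplex l)
    (pitil : Measure (Fin N → Pt d))
    (hwass : ∀ i : Fin N, i ≠ ⟨0, hN⟩ →
      (∫⁻ x, ENNReal.ofReal (‖x ⟨0, hN⟩ - x i‖ ^ 2) ∂pitil) = W2sq (μ ⟨0, hN⟩) (μ i)) :
    MOT l pitil
      ≤ ∑ i ∈ Finset.univ.erase (⟨0, hN⟩ : Fin N),
          ENNReal.ofReal (l i) * W2sq (μ ⟨0, hN⟩) (μ i)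
    ∧ ∀ pihat, IsPlan μ pihat → (∀ π, IsPlan μ π → MOT l pihat ≤ MOT l π) →
        MOT l pitil ≤ ENNReal.ofReal (1 / l ⟨0, hN⟩) * MOT l pihat := by
  set i₀ : Fin N := ⟨0, hN⟩
  have hl₀ : ∀ i, 0 ≤ l i := fun i => (hl.1 i).le
  have hbound : MOT l pitil ≤ ∑ t ∈ univ.erase i₀, ENNReal.ofReal (l t) * W2sq (μ i₀) (μ t) :=
    (MOT_le_sum_erase_mul_lintegral hl₀ hl.2 pitil i₀).trans_eq
      (sum_congr rfl fun t ht => by rw [hwass t (ne_of_mem_erase ht)])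
  refine ⟨hbound, fun pihat hpihat _ => ?_⟩
  have hIoi : Ioi i₀ = univ.erase i₀ := by
    ext t
    simp [i₀, Fin.lt_def, Fin.ext_iff, Nat.pos_iff_ne_zero]
  have hrow : ENNReal.ofReal (l i₀) * MOT l pitil ≤ MOT l pihat :=
    calc ENNReal.ofReal (l i₀) * MOT l pitil
        ≤ ∑ t ∈ univ.erase i₀, ENNReal.ofReal (l i₀ * l t) * W2sq (μ i₀) (μ t) := by
          grw [hbound]
          simp only [mul_sum, ENNReal.ofReal_mul (hl₀ i₀), mul_assoc, le_rfl]
      _ ≤ ∑ t ∈ Ioi i₀, ENNReal.ofReal (l i₀ * l t)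
            * ∫⁻ x, ENNReal.ofReal (‖x i₀ - x t‖ ^ 2) ∂pihat := by
          rw [hIoi]
          gcongr with t
          exact W2sq_le_lintegral_of_isPlan hpihat i₀ t
      _ ≤ MOT l pihat := sum_Ioi_mul_lintegral_le_MOT l pihat i₀
  rwa [one_div, ENNReal.ofReal_inv_of_pos (hl.1 i₀), ← ENNReal.mul_le_iff_le_inv
    (ENNReal.ofReal_pos.2 (hl.1 i₀)).ne' ENNReal.ofReal_ne_top]

/-- If `π̃ ∈ Π(μ¹,…,μ^N)` satisfies
`∫ ‖x₁ − x_i‖² dπ̃ = W₂²(μ¹, μ^i)` for all `i ≠ 1`, then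
`Φ(π̃) ≤ Σ_{i≥2} λ_i W₂²(μ¹, μ^i)` and `Φ(π̃) ≤ (1/λ₁) Φ(π̂)` for every optimal `π̂`. -/
theorem stmt11 {d N : ℕ} (hN : 0 < N) (μ : Fin N → Measure (Pt d))
    (hμ : ∀ i, IsProbabilityMeasure (μ i) ∧ FinitelySupported (μ i))
    (l : Fin N → ℝ) (hl : InSimplex l)
    (pitil : Measure (Fin N → Pt d)) (hplan : IsPlan μ pitil)
    (hwass : ∀ i : Fin N, i ≠ ⟨0, hN⟩ →
      (∫⁻ x, ENNReal.ofReal (‖x ⟨0, hN⟩ - x i‖ ^ 2) ∂pitil) = W2sq (μ ⟨0, hN⟩) (μ i)) :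
    MOT l pitil
      ≤ ∑ i ∈ Finset.univ.erase (⟨0, hN⟩ : Fin N),
          ENNReal.ofReal (l i) * W2sq (μ ⟨0, hN⟩) (μ i)
    ∧ ∀ pihat, IsPlan μ pihat → (∀ π, IsPlan μ π → MOT l pihat ≤ MOT l π) →
        MOT l pitil ≤ ENNReal.ofReal (1 / l ⟨0, hN⟩) * MOT l pihat :=
  stmt11_general hN μ l hl pitil hwass
end
end

section
/- Let d = 1, so μ¹,…,μ^N are finitely supported probability measures on ℝ. A plan π ∈ Π(μ¹,…,μ^N) is said to have the sorting property if the coordinatewise partial order (x₁,…,x_N) ⪯ (y₁,…,y_N) iff x_i ≤ y_i for all i, is a total order on the support of π. Then π ∈ Π(μ¹,…,μ^N) has the sorting property if and only if π is an optimal plan, i.e. minimizes Φ over Π(μ¹,…,μ^N). -/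
open MeasureTheory
open scoped ENNReal

noncomputable section

/-- A measure on `ℝ` is finitely supported if it vanishes outside a finite set. -/
def FinitelySupportedR (μ : Measure ℝ) : Prop :=
  ∃ s : Finset ℝ, μ ((s : Set ℝ)ᶜ) = 0

/-- `π` is a multi-marginal transport plan on `ℝ^N` with marginals `μ i`. -/
def IsPlanR {N : ℕ} (μ : Fin N → Measure ℝ) (π : Measure (Fin N → ℝ)) : Prop :=
  IsProbabilityMeasure π ∧ ∀ i, π.map (fun x => x i) = μ i

/-- The multi-marginal optimal transport cost `Φ(π)` for measures on `ℝ`. -/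
def MOTR {N : ℕ} (l : Fin N → ℝ) (π : Measure (Fin N → ℝ)) : ℝ≥0∞ :=
  ∫⁻ x, ∑ s : Fin N, ∑ t : Fin N,
    (if s < t then ENNReal.ofReal (l s * l t * |x s - x t| ^ 2) else 0) ∂π

/-- A plan has the sorting property if the coordinatewise partial order is total on
its support. -/
def SortingProperty {N : ℕ} (π : Measure (Fin N → ℝ)) : Prop :=
  ∀ x ∈ msupport π, ∀ y ∈ msupport π, (∀ i, x i ≤ y i) ∨ (∀ i, y i ≤ x i)

/-!
The cost `c(x) = ∑_{s<t} λ_s λ_t (x_s - x_t)²` is strictly submodular: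
`c(x ⊓ y) + c(x ⊔ y) < c(x) + c(y)` for incomparable `x, y`. Moving mass from two incomparable
atoms `x, y` of a plan to `x ⊓ y, x ⊔ y` keeps every marginal and lowers the cost, so optimal plans
are sorted. Conversely, the atoms of a sorted plan form a chain, so its distribution function is
`π(Iic y) = min_i F_i(y_i)`, where `F_i` is the distribution function of `μ^i`; hence a sorted plan
is determined by its marginals. All plans live on the finite grid `∏ supp μ^i`, so an optimal plan
exists by compactness; being sorted, it coincides with any sorted plan.
-/

open Set

namespace MeasureTheory.Measure

variable {α : Type*} [MeasurableSpace α] [MeasurableSingletonClass α]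

lemma eq_sum_smul_dirac_of_measure_compl_eq_zero {π : Measure α} {T : Finset α}
    (hT : π (↑T)ᶜ = 0) : π = ∑ z ∈ T, π {z} • dirac z := by
  classical
  ext A hA
  have hTA : ↑T ∩ A = ↑(T.filter (· ∈ A)) := by ext; simp
  rw [← measure_inter_conull hT, inter_comm, hTA, ← sum_measure_singleton]
  simp [dirac_apply, Set.indicator_apply, Finset.sum_filter]

lemma lintegral_sum_smul_dirac (T : Finset α) (w c : α → ℝ≥0∞) :
    ∫⁻ x, c x ∂(∑ z ∈ T, w z • dirac z) = ∑ z ∈ T, w z * c z := by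
  simp [lintegral_finsetSum_measure, lintegral_smul_measure, lintegral_dirac]

lemma lintegral_ne_top_of_measure_compl_eq_zero {π : Measure α} [IsFiniteMeasure π]
    {c : α → ℝ≥0∞} (hc : ∀ x, c x ≠ ⊤) {T : Finset α} (hT : π (↑T)ᶜ = 0) :
    ∫⁻ x, c x ∂π ≠ ⊤ := by
  rw [eq_sum_smul_dirac_of_measure_compl_eq_zero hT, lintegral_sum_smul_dirac]
  exact ENNReal.sum_ne_top.2 fun z _ => ENNReal.mul_ne_top (measure_ne_top _ _) (hc z)

omit [MeasurableSingletonClass α] in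
lemma continuous_sum_smul_dirac_apply (T : Finset α) (A : Set α) :
    Continuous fun w : α → ℝ≥0∞ => (∑ z ∈ T, w z • dirac z) A := by
  simp only [coe_finsetSum, Finset.sum_apply, smul_apply, smul_eq_mul]
  exact continuous_finsetSum _ fun z _ =>
    (ENNReal.continuous_mul_const (measure_ne_top _ _)).comp (continuous_apply z)

lemma exists_eq_add_smul_dirac (π : Measure α) {x : α} {ε : ℝ≥0∞} (h : ε ≤ π {x}) :
    ∃ ρ, π = ρ + ε • dirac x := by
  refine ⟨π.restrict {x}ᶜ + (π {x} - ε) • dirac x, ?_⟩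
  rw [add_assoc, ← add_smul, tsub_add_cancel_of_le h, ← restrict_singleton,
    restrict_compl_add_restrict (measurableSet_singleton x)]

lemma exists_eq_add_smul_dirac_add_dirac (π : Measure α) {x y : α} (hxy : x ≠ y)
    {ε : ℝ≥0∞} (hx : ε ≤ π {x}) (hy : ε ≤ π {y}) :
    ∃ ρ, π = ρ + ε • (dirac x + dirac y) := by
  obtain ⟨ρ₁, rfl⟩ := exists_eq_add_smul_dirac π hx
  obtain ⟨ρ, rfl⟩ := exists_eq_add_smul_dirac ρ₁ (by simpa [hxy] using hy)
  exact ⟨ρ, by rw [smul_add]; abel⟩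

theorem ext_of_Iic_pi {ι : Type*} [Finite ι] (μ ν : Measure (ι → ℝ)) [IsFiniteMeasure μ]
    (h : ∀ y, μ (Iic y) = ν (Iic y)) : μ = ν := by
  have hgen : (MeasurableSpace.pi : MeasurableSpace (ι → ℝ)) = .generateFrom (range Iic) := by
    have hbox : pi univ '' pi univ (fun _ : ι => range (Iic : ℝ → Set ℝ)) = range Iic := by
      ext S
      simp only [mem_image, mem_pi, mem_univ, forall_const, mem_range]
      constructor
      · rintro ⟨t, ht, rfl⟩
        choose y hy using ht
        exact ⟨y, by rw [← pi_univ_Iic]; exact congrArg _ (funext hy)⟩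
      · rintro ⟨y, rfl⟩
        exact ⟨fun i => Iic (y i), fun i => ⟨y i, rfl⟩, pi_univ_Iic y⟩
    rw [← hbox, generateFrom_eq_pi (fun _ => (borel_eq_generateFrom_Iic ℝ).symm.trans
      BorelSpace.measurable_eq.symm) fun _ => ⟨fun n : ℕ => Iic (n : ℝ), fun n => ⟨_, rfl⟩,
        eq_univ_of_forall fun x => mem_iUnion.2 ⟨⌈x⌉₊, Nat.le_ceil x⟩⟩]
  refine ext_of_generateFrom_of_iUnion _ (fun n : ℕ => Iic fun _ => (n : ℝ)) hgen
    (by rintro _ ⟨a, rfl⟩ _ ⟨b, rfl⟩ -; exact ⟨a ⊓ b, Iic_inter_Iic.symm⟩) ?_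
    (fun n => ⟨_, rfl⟩) (fun _ => measure_ne_top _ _) (by rintro _ ⟨y, rfl⟩; exact h y)
  refine eq_univ_of_forall fun x => mem_iUnion.2 ?_
  obtain ⟨M, hM⟩ := (finite_range x).bddAbove
  exact ⟨⌈M⌉₊, fun i => (hM (mem_range_self i)).trans (Nat.le_ceil M)⟩

end MeasureTheory.Measure

section PairCost

variable {N : ℕ}

def pairCost (l x : Fin N → ℝ) : ℝ :=
  ∑ s, ∑ t, if s < t then l s * l t * (x s - x t) ^ 2 else 0

lemma pairCost_summand_nonneg {l : Fin N → ℝ} (hl : ∀ i, 0 ≤ l i) (x : Fin N → ℝ) (s t : Fin N) :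
    0 ≤ if s < t then l s * l t * (x s - x t) ^ 2 else 0 := by
  split_ifs
  exacts [mul_nonneg (mul_nonneg (hl s) (hl t)) (sq_nonneg _), le_rfl]

lemma pairCost_nonneg {l : Fin N → ℝ} (hl : ∀ i, 0 ≤ l i) (x : Fin N → ℝ) : 0 ≤ pairCost l x :=
  Finset.sum_nonneg fun s _ => Finset.sum_nonneg fun t _ => pairCost_summand_nonneg hl x s t

lemma MOTR_eq_lintegral_pairCost {l : Fin N → ℝ} (hl : ∀ i, 0 ≤ l i) (π : Measure (Fin N → ℝ)) :
    MOTR l π = ∫⁻ x, ENNReal.ofReal (pairCost l x) ∂π := by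
  refine lintegral_congr fun x => ?_
  simp only [pairCost, sq_abs]
  rw [ENNReal.ofReal_sum_of_nonneg fun s _ =>
    Finset.sum_nonneg fun t _ => pairCost_summand_nonneg hl x s t]
  refine Finset.sum_congr rfl fun s _ => ?_
  rw [ENNReal.ofReal_sum_of_nonneg fun t _ => pairCost_summand_nonneg hl x s t]
  refine Finset.sum_congr rfl fun t _ => ?_
  split_ifs <;> simp

lemma sq_min_sub_min_add_sq_max_sub_max_le (a b c d : ℝ) :
    (min a c - min b d) ^ 2 + (max a c - max b d) ^ 2 ≤ (a - b) ^ 2 + (c - d) ^ 2 := by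
  rcases le_total a c with h1 | h1 <;> rcases le_total b d with h2 | h2 <;>
    simp only [min_eq_left, min_eq_right, max_eq_left, max_eq_right, h1, h2] <;>
    nlinarith [mul_nonneg (sub_nonneg.2 h1) (sub_nonneg.2 h2)]

lemma sq_min_sub_min_add_sq_max_sub_max_lt {a b c d : ℝ} (h : (a - c) * (b - d) < 0) :
    (min a c - min b d) ^ 2 + (max a c - max b d) ^ 2 < (a - b) ^ 2 + (c - d) ^ 2 := by
  rcases le_total a c with h1 | h1 <;> rcases le_total b d with h2 | h2 <;>
    simp only [min_eq_left, min_eq_right, max_eq_left, max_eq_right, h1, h2] <;>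
    nlinarith

theorem pairCost_inf_add_pairCost_sup_lt {l : Fin N → ℝ} (hl : ∀ i, 0 < l i)
    {x y : Fin N → ℝ} (hxy : ¬(x ≤ y ∨ y ≤ x)) :
    pairCost l (x ⊓ y) + pairCost l (x ⊔ y) < pairCost l x + pairCost l y := by
  let term (z : Fin N → ℝ) (s t : Fin N) : ℝ := if s < t then l s * l t * (z s - z t) ^ 2 else 0
  have hle : ∀ s t, term (x ⊓ y) s t + term (x ⊔ y) s t ≤ term x s t + term y s t := by
    intro s t
    simp only [term, Pi.inf_apply, Pi.sup_apply]
    split_ifs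
    · rw [← mul_add, ← mul_add]
      exact mul_le_mul_of_nonneg_left (sq_min_sub_min_add_sq_max_sub_max_le _ _ _ _)
        (mul_pos (hl s) (hl t)).le
    · simp
  have hlt : ∀ s t, s < t → (x s - y s) * (x t - y t) < 0 →
      term (x ⊓ y) s t + term (x ⊔ y) s t < term x s t + term y s t := by
    intro s t hst hcross
    simp only [term, if_pos hst, Pi.inf_apply, Pi.sup_apply, ← mul_add]
    exact mul_lt_mul_of_pos_left (sq_min_sub_min_add_sq_max_sub_max_lt hcross)
      (mul_pos (hl s) (hl t))
  obtain ⟨⟨s, hs⟩, ⟨t, ht⟩⟩ : (∃ s, y s < x s) ∧ ∃ t, x t < y t := by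
    simpa [not_or, Pi.le_def] using hxy
  have hst_cross : (x s - y s) * (x t - y t) < 0 :=
    mul_neg_of_pos_of_neg (by linarith) (by linarith)
  obtain ⟨s, t, hst, hcross⟩ : ∃ s t, s < t ∧ (x s - y s) * (x t - y t) < 0 := by
    rcases lt_trichotomy s t with h | rfl | h
    · exact ⟨s, t, h, hst_cross⟩
    · linarith
    · exact ⟨t, s, h, by linarith⟩
  simp only [pairCost, ← Finset.sum_add_distrib]
  refine Finset.sum_lt_sum (fun s _ => Finset.sum_le_sum fun t _ => hle s t)
    ⟨s, Finset.mem_univ _, ?_⟩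
  exact Finset.sum_lt_sum (fun t _ => hle s t) ⟨t, Finset.mem_univ _, hlt s t hst hcross⟩

theorem ofReal_pairCost_inf_add_ofReal_pairCost_sup_lt {l : Fin N → ℝ} (hl : ∀ i, 0 < l i)
    {x y : Fin N → ℝ} (hxy : ¬(x ≤ y ∨ y ≤ x)) :
    ENNReal.ofReal (pairCost l (x ⊓ y)) + ENNReal.ofReal (pairCost l (x ⊔ y)) <
      ENNReal.ofReal (pairCost l x) + ENNReal.ofReal (pairCost l y) := by
  have h0 := pairCost_nonneg fun i => (hl i).le
  rw [← ENNReal.ofReal_add (h0 _) (h0 _), ← ENNReal.ofReal_add (h0 _) (h0 _),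
    ENNReal.ofReal_lt_ofReal_iff_of_nonneg (add_nonneg (h0 _) (h0 _))]
  exact pairCost_inf_add_pairCost_sup_lt hl hxy

end PairCost

section Swap

open Measure

variable {ι : Type*} [Countable ι] {c : (ι → ℝ) → ℝ≥0∞}

omit [Countable ι] in
lemma map_eval_dirac_inf_add_dirac_sup (x y : ι → ℝ) (i : ι) :
    (dirac (x ⊓ y) + dirac (x ⊔ y)).map (· i) = (dirac x + dirac y).map (· i) := by
  simp only [Measure.map_add _ _ (measurable_pi_apply i),
    map_dirac' (measurable_pi_apply i), Pi.inf_apply, Pi.sup_apply]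
  rcases le_total (x i) (y i) with h | h
  · simp [h]
  · simp [h, add_comm]

theorem exists_lintegral_lt_of_incomparable_atoms
    (hc : ∀ x y, ¬(x ≤ y ∨ y ≤ x) → c (x ⊓ y) + c (x ⊔ y) < c x + c y)
    (π : Measure (ι → ℝ)) [IsFiniteMeasure π] (hπ : ∫⁻ x, c x ∂π ≠ ⊤)
    {x y : ι → ℝ} (hx : π {x} ≠ 0) (hy : π {y} ≠ 0) (hxy : ¬(x ≤ y ∨ y ≤ x)) :
    ∃ π' : Measure (ι → ℝ), π' univ = π univ ∧ (∀ i, π'.map (· i) = π.map (· i)) ∧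
      ∫⁻ x, c x ∂π' < ∫⁻ x, c x ∂π := by
  have hne : x ≠ y := by rintro rfl; exact hxy (Or.inl le_rfl)
  obtain ⟨ε, hε, hε_top, hεx, hεy⟩ : ∃ ε : ℝ≥0∞, ε ≠ 0 ∧ ε ≠ ⊤ ∧ ε ≤ π {x} ∧ ε ≤ π {y} :=
    ⟨min (π {x}) (π {y}), by simp [hx, hy], ((min_le_left _ _).trans_lt (measure_lt_top π _)).ne,
      min_le_left _ _, min_le_right _ _⟩
  obtain ⟨ρ, rfl⟩ := exists_eq_add_smul_dirac_add_dirac π hne hεx hεy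
  refine ⟨ρ + ε • (dirac (x ⊓ y) + dirac (x ⊔ y)), by simp, fun i => ?_, ?_⟩
  · rw [Measure.map_add _ _ (measurable_pi_apply i), Measure.map_add _ _ (measurable_pi_apply i),
      Measure.map_smul, Measure.map_smul, map_eval_dirac_inf_add_dirac_sup]
  · simp only [lintegral_add_measure, lintegral_smul_measure, lintegral_dirac] at hπ ⊢
    have hρ : ∫⁻ x, c x ∂ρ ≠ ⊤ := fun h => hπ (by simp [h])
    exact ENNReal.add_lt_add_left hρ (ENNReal.mul_lt_mul_right hε hε_top (hc x y hxy))

theorem sortingProperty_of_forall_lintegral_le {N : ℕ} {c : (Fin N → ℝ) → ℝ≥0∞}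
    (hc : ∀ x y, ¬(x ≤ y ∨ y ≤ x) → c (x ⊓ y) + c (x ⊔ y) < c x + c y)
    {μ : Fin N → Measure ℝ} {π : Measure (Fin N → ℝ)} (hπ : IsPlanR μ π)
    (hfin : ∫⁻ x, c x ∂π ≠ ⊤)
    (hopt : ∀ π', IsPlanR μ π' → ∫⁻ x, c x ∂π ≤ ∫⁻ x, c x ∂π') :
    SortingProperty π := by
  have := hπ.1
  intro x hx y hy
  by_contra hxy
  obtain ⟨π', huniv, hmap, hlt⟩ := exists_lintegral_lt_of_incomparable_atoms hc π hfin hx hy hxy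
  have hπ' : IsPlanR μ π' := ⟨⟨huniv.trans measure_univ⟩, fun i => (hmap i).trans (hπ.2 i)⟩
  exact (hopt π' hπ').not_gt hlt

end Swap

section Existence

open Measure

variable {N : ℕ}

lemma isClosed_setOf_isPlanR_sum_smul_dirac (μ : Fin N → Measure ℝ) (T : Finset (Fin N → ℝ)) :
    IsClosed {w : (Fin N → ℝ) → ℝ≥0∞ | IsPlanR μ (∑ z ∈ T, w z • dirac z)} := by
  have hset : {w : (Fin N → ℝ) → ℝ≥0∞ | IsPlanR μ (∑ z ∈ T, w z • dirac z)} =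
      {w | (∑ z ∈ T, w z • dirac z) univ = 1} ∩ ⋂ i, ⋂ A ∈ {A : Set ℝ | MeasurableSet A},
        {w | (∑ z ∈ T, w z • dirac z) ((· i) ⁻¹' A) = μ i A} := by
    ext w
    simp only [IsPlanR, isProbabilityMeasure_iff, Measure.ext_iff, mem_inter_iff, mem_ofPred_eq,
      mem_iInter]
    refine and_congr_right fun _ => forall_congr' fun i => forall_congr' fun A => ?_
    exact imp_congr_right fun hA => by rw [map_apply (measurable_pi_apply i) hA]
  rw [hset]
  exact (isClosed_eq (continuous_sum_smul_dirac_apply T univ) continuous_const).inter <|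
    isClosed_iInter fun i => isClosed_biInter fun A _ =>
      isClosed_eq (continuous_sum_smul_dirac_apply T _) continuous_const

theorem exists_isPlanR_forall_lintegral_le {c : (Fin N → ℝ) → ℝ≥0∞} (hc : ∀ x, c x ≠ ⊤)
    {μ : Fin N → Measure ℝ} {T : Finset (Fin N → ℝ)}
    (hT : ∀ π, IsPlanR μ π → π (↑T)ᶜ = 0) {π : Measure (Fin N → ℝ)} (hπ : IsPlanR μ π) :
    ∃ π₀, IsPlanR μ π₀ ∧ ∀ π', IsPlanR μ π' → ∫⁻ x, c x ∂π₀ ≤ ∫⁻ x, c x ∂π' := by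
  have hatoms : ∀ π', IsPlanR μ π' → IsPlanR μ (∑ z ∈ T, π' {z} • dirac z) := fun π' hπ' =>
    (eq_sum_smul_dirac_of_measure_compl_eq_zero (hT π' hπ')) ▸ hπ'
  have hcont : Continuous fun w : (Fin N → ℝ) → ℝ≥0∞ => ∑ z ∈ T, w z * c z :=
    continuous_finsetSum _ fun z _ =>
      (ENNReal.continuous_mul_const (hc z)).comp (continuous_apply z)
  -- The weight space `(Fin N → ℝ) → ℝ≥0∞` is compact, so closedness is enough.
  obtain ⟨w₀, hw₀, hmin⟩ := (isClosed_setOf_isPlanR_sum_smul_dirac μ T).isCompact.exists_isMinOn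
    ⟨_, hatoms π hπ⟩ hcont.continuousOn
  refine ⟨_, hw₀, fun π' hπ' => ?_⟩
  rw [eq_sum_smul_dirac_of_measure_compl_eq_zero (hT π' hπ'), lintegral_sum_smul_dirac,
    lintegral_sum_smul_dirac]
  exact hmin (hatoms π' hπ')

end Existence

namespace SortingProperty

variable {N : ℕ} [NeZero N] {π : Measure (Fin N → ℝ)}

theorem measure_Iic {T : Finset (Fin N → ℝ)} (hT : π (↑T)ᶜ = 0) (hπ : SortingProperty π)
    (y : Fin N → ℝ) : π (Iic y) = ⨅ i, π.map (· i) (Iic (y i)) := by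
  classical
  set S := T.filter fun z => π {z} ≠ 0
  have hS : π (↑S)ᶜ = 0 := by
    have hnull : π ↑(T.filter fun z => π {z} = 0) = 0 := by
      rw [← sum_measure_singleton]
      exact Finset.sum_eq_zero fun z hz => (Finset.mem_filter.1 hz).2
    refine measure_mono_null (fun z hz => ?_) (measure_union_null hT hnull)
    by_cases hzT : z ∈ T
    · exact Or.inr (by simpa [S, hzT] using hz)
    · exact Or.inl hzT
  let B (i : Fin N) : Finset (Fin N → ℝ) := S.filter fun z => z i ≤ y i
  have hchain : ∀ i j, B i ⊆ B j ∨ B j ⊆ B i := by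
    intro i j
    by_contra! h
    obtain ⟨a, ha, haj⟩ := Finset.not_subset.1 h.1
    obtain ⟨b, hb, hbi⟩ := Finset.not_subset.1 h.2
    simp only [B, Finset.mem_filter, not_and, not_le] at ha haj hb hbi
    rcases hπ a (Finset.mem_filter.1 ha.1).2 b (Finset.mem_filter.1 hb.1).2 with hab | hba
    · exact (haj ha.1).not_ge ((hab j).trans hb.2)
    · exact (hbi hb.1).not_ge ((hba i).trans ha.2)
  obtain ⟨i₀, -, hi₀⟩ := Finset.exists_min_image Finset.univ (fun i => (B i).card)
    Finset.univ_nonempty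
  have hmin : ∀ i, B i₀ ⊆ B i := fun i => (hchain i₀ i).elim id fun h =>
    (Finset.eq_of_subset_of_card_le h (hi₀ i (Finset.mem_univ _))).superset
  have hB : Iic y ∩ ↑S = (· i₀) ⁻¹' Iic (y i₀) ∩ ↑S := by
    ext z
    simp only [mem_inter_iff, mem_Iic, mem_preimage, Finset.mem_coe]
    refine ⟨fun h => ⟨h.1 i₀, h.2⟩, fun h => ⟨fun i => ?_, h.2⟩⟩
    have : z ∈ B i := hmin i (Finset.mem_filter.2 ⟨h.2, h.1⟩)
    exact (Finset.mem_filter.1 this).2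
  have hi₀_eq : π (Iic y) = π.map (· i₀) (Iic (y i₀)) := by
    rw [Measure.map_apply (measurable_pi_apply i₀) measurableSet_Iic, ← measure_inter_conull hS,
      hB, measure_inter_conull hS]
  refine le_antisymm (le_iInf fun i => ?_) (iInf_le_of_le i₀ hi₀_eq.ge)
  rw [Measure.map_apply (measurable_pi_apply i) measurableSet_Iic]
  exact measure_mono fun z hz => hz i

theorem ext [IsFiniteMeasure π] {π' : Measure (Fin N → ℝ)} {T T' : Finset (Fin N → ℝ)}
    (hT : π (↑T)ᶜ = 0) (hT' : π' (↑T')ᶜ = 0) (hπ : SortingProperty π)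
    (hπ' : SortingProperty π') (hmap : ∀ i, π.map (· i) = π'.map (· i)) : π = π' :=
  Measure.ext_of_Iic_pi π π' fun y => by
    simp only [hπ.measure_Iic hT, hπ'.measure_Iic hT', hmap]

end SortingProperty

lemma IsPlanR.measure_compl_piFinset {N : ℕ} {μ : Fin N → Measure ℝ} {π : Measure (Fin N → ℝ)}
    (hπ : IsPlanR μ π) {s : Fin N → Finset ℝ} (hs : ∀ i, μ i (↑(s i))ᶜ = 0) :
    π (↑(Fintype.piFinset s))ᶜ = 0 := by
  have hsub : (↑(Fintype.piFinset s) : Set (Fin N → ℝ))ᶜ ⊆ ⋃ i, (· i) ⁻¹' (↑(s i))ᶜ := by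
    intro x hx
    simpa [Fintype.mem_piFinset] using hx
  refine measure_mono_null hsub (measure_iUnion_null fun i => ?_)
  rw [← Measure.map_apply (measurable_pi_apply i) (s i).finite_toSet.measurableSet.compl, hπ.2 i]
  exact hs i

theorem sortingProperty_iff_forall_lintegral_le {N : ℕ} [NeZero N] {c : (Fin N → ℝ) → ℝ≥0∞}
    (hc : ∀ x y, ¬(x ≤ y ∨ y ≤ x) → c (x ⊓ y) + c (x ⊔ y) < c x + c y) (hc_top : ∀ x, c x ≠ ⊤)
    {μ : Fin N → Measure ℝ} {T : Finset (Fin N → ℝ)} (hT : ∀ π, IsPlanR μ π → π (↑T)ᶜ = 0)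
    {π : Measure (Fin N → ℝ)} (hπ : IsPlanR μ π) :
    SortingProperty π ↔ ∀ π', IsPlanR μ π' → ∫⁻ x, c x ∂π ≤ ∫⁻ x, c x ∂π' := by
  have hsorted : ∀ π', IsPlanR μ π' →
      (∀ π'', IsPlanR μ π'' → ∫⁻ x, c x ∂π' ≤ ∫⁻ x, c x ∂π'') → SortingProperty π' :=
    fun π' hπ' =>
      have := hπ'.1
      sortingProperty_of_forall_lintegral_le hc hπ'
        (Measure.lintegral_ne_top_of_measure_compl_eq_zero hc_top (hT π' hπ'))
  refine ⟨fun hπ_sorted π' hπ' => ?_, hsorted π hπ⟩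
  obtain ⟨π₀, hπ₀, hmin⟩ := exists_isPlanR_forall_lintegral_le hc_top hT hπ
  have := hπ.1
  have hπ_eq : π = π₀ := hπ_sorted.ext (hT π hπ) (hT π₀ hπ₀) (hsorted π₀ hπ₀ hmin)
    fun i => (hπ.2 i).trans (hπ₀.2 i).symm
  exact hπ_eq ▸ hmin π' hπ'

/-- For `d = 1`, a plan `π ∈ Π(μ¹,…,μ^N)` has the sorting property if and
only if it is an optimal MOT plan. -/
theorem stmt18 {N : ℕ} (μ : Fin N → Measure ℝ)
    (hμ : ∀ i, IsProbabilityMeasure (μ i) ∧ FinitelySupportedR (μ i))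
    (l : Fin N → ℝ) (hl : (∀ i, 0 < l i) ∧ ∑ i, l i = 1)
    (π : Measure (Fin N → ℝ)) (hπ : IsPlanR μ π) :
    SortingProperty π ↔ ∀ π', IsPlanR μ π' → MOTR l π ≤ MOTR l π' := by
  obtain ⟨hl_pos, hl_sum⟩ := hl
  have : NeZero N := ⟨by rintro rfl; simp at hl_sum⟩
  choose s hs using fun i => (hμ i).2
  simp only [MOTR_eq_lintegral_pairCost fun i => (hl_pos i).le]
  exact sortingProperty_iff_forall_lintegral_le
    (fun _ _ => ofReal_pairCost_inf_add_ofReal_pairCost_sup_lt hl_pos)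
    (fun _ => ENNReal.ofReal_ne_top) (fun π' hπ' => hπ'.measure_compl_piFinset hs) hπ
end
end
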